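/- arXiv:2007.03009 — 3 statements merged into one kernel-verified Lean document; each statement's English description precedes it below -/
import Mathlib

section
/- If p > 4/3 and θ ≥ p, then 2t₀⁻ < p, where t₀⁻ = √ϖ − √(ϖ − √ϖ) and ϖ = pθ(p+1)/(θ+1). (Proof idea: ϖ > 16/9 and f(ϖ) = √ϖ − √(ϖ−√ϖ) is decreasing, with 2f(16/9) = 4/3.) -/
theorem stmt4 (p θ : ℝ) (hp : 4 / 3 < p) (hpθ : p ≤ θ) :
    2 * (Real.sqrt (p * θ * (p + 1) / (θ + 1)) -
      Real.sqrt (p * θ * (p + 1) / (θ + 1) - Real.sqrt (p * θ * (p + 1) / (θ + 1)))) < p := by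
  have hp0 : 0 < p := by linarith
  have hθ1 : 0 < θ + 1 := by linarith
  set w := p * θ * (p + 1) / (θ + 1) with hw
  have hwp : p ^ 2 ≤ w := by
    rw [hw, le_div_iff₀ hθ1]; nlinarith
  have hs : p ≤ Real.sqrt w := by
    have := Real.sqrt_le_sqrt hwp
    rwa [Real.sqrt_sq hp0.le] at this
  set s := Real.sqrt w with hsdef
  have hs2 : s ^ 2 = w := Real.sq_sqrt (by nlinarith)
  have hws : 0 ≤ w - s := by nlinarith
  set t := Real.sqrt (w - s) with htdef
  have ht0 : 0 ≤ t := Real.sqrt_nonneg _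
  have ht2 : t ^ 2 = w - s := Real.sq_sqrt hws
  nlinarith [sq_nonneg (2 * s - p - 2 * t), sq_nonneg (2 * s - p + 2 * t)]
end

section
/- Let 1 < p ≤ θ and L(z) = z⁴ − (16pθ(p+1)/(θ+1)) z² + (16pθ(p+1)(p+θ+2)/(θ+1)²) z − 16pθ(p+1)²/(θ+1)². Then L has a unique root z₀ in the interval (2, ∞). -/
open Polynomial Set

private lemma quartic_aux (A B D : ℝ) (hA : 0 < A) (hB : 0 < B) (hD : 0 < D)
    (hv1 : 0 < 1 - A + B - D) (hv2 : 16 - 4 * A + 2 * B - D < 0) :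
    ∃! z₀ : ℝ, z₀ ∈ Set.Ioi (2 : ℝ) ∧
      z₀ ^ 4 - A * z₀ ^ 2 + B * z₀ - D = 0 := by
  set f : ℝ → ℝ := fun z => z ^ 4 - A * z ^ 2 + B * z - D with hfdef
  have hf0 : f 0 < 0 := by simp only [hfdef]; norm_num; linarith
  have hf1' : 0 < f 1 := by simp only [hfdef]; norm_num; linarith
  have hf2 : f 2 < 0 := by simp only [hfdef]; norm_num; linarith
  set M : ℝ := A + B + D + 2 with hMdef
  have hM2 : 2 < M := by simp only [hMdef]; linarith
  have hM0 : (0:ℝ) < M := by linarith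
  have hMM : M ≤ M ^ 2 := by nlinarith [sq_nonneg (M - 1)]
  have h1 : B * M ≤ B * M ^ 2 := mul_le_mul_of_nonneg_left hMM hB.le
  have h2 : D ≤ D * M ^ 2 := by
    nlinarith [mul_le_mul_of_nonneg_left (show (1:ℝ) ≤ M ^ 2 by nlinarith) hD.le]
  have hMeq : A * M ^ 2 + B * M ^ 2 + D * M ^ 2 = (M - 2) * M ^ 2 := by
    have h : A + B + D = M - 2 := by rw [hMdef]; ring
    linear_combination M ^ 2 * h
  have hM3 : 0 < M ^ 3 * (M - 1) := mul_pos (pow_pos hM0 3) (by linarith)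
  have hfM : 0 < f M := by
    simp only [hfdef]
    nlinarith [mul_pos hB hM0, h2, hMeq, hM3, sq_nonneg M]
  have hfnM : 0 < f (-M) := by
    simp only [hfdef]
    nlinarith [h1, h2, hMeq, hM3, sq_nonneg M]
  have hcont : Continuous f := by
    simp only [hfdef]
    exact ((continuous_pow 4).sub (continuous_const.mul (continuous_pow 2))).add
      (continuous_const.mul continuous_id') |>.sub continuous_const
  obtain ⟨z₀, hz₀mem, hz₀⟩ : ∃ z, z ∈ Ioo (2:ℝ) M ∧ f z = 0 := by
    obtain ⟨z, hz, hfz⟩ := intermediate_value_Ioo (le_of_lt hM2) hcont.continuousOn ⟨hf2, hfM⟩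
    exact ⟨z, hz, hfz⟩
  obtain ⟨r1, hr1mem, hr1⟩ : ∃ r, r ∈ Ioo (-M) (0:ℝ) ∧ f r = 0 := by
    obtain ⟨r, hr, hfr⟩ := intermediate_value_Ioo' (by linarith : -M ≤ (0:ℝ))
      hcont.continuousOn ⟨hf0, hfnM⟩
    exact ⟨r, hr, hfr⟩
  obtain ⟨r2, hr2mem, hr2⟩ : ∃ r, r ∈ Ioo (0:ℝ) 1 ∧ f r = 0 := by
    obtain ⟨r, hr, hfr⟩ := intermediate_value_Ioo (by norm_num : (0:ℝ) ≤ 1)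
      hcont.continuousOn ⟨hf0, hf1'⟩
    exact ⟨r, hr, hfr⟩
  obtain ⟨r3, hr3mem, hr3⟩ : ∃ r, r ∈ Ioo (1:ℝ) 2 ∧ f r = 0 := by
    obtain ⟨r, hr, hfr⟩ := intermediate_value_Ioo' (by norm_num : (1:ℝ) ≤ 2)
      hcont.continuousOn ⟨hf2, hf1'⟩
    exact ⟨r, hr, hfr⟩
  have key : ∀ x y : ℝ, 2 < x → 2 < y → f x = 0 → f y = 0 → x = y := by
    intro x y hx hy hfx hfy
    by_contra hxy
    set P : ℝ[X] := X ^ 4 - Polynomial.C A * X ^ 2 + Polynomial.C B * X - Polynomial.C D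
      with hPdef
    have hPeval : ∀ z : ℝ, P.eval z = f z := by
      intro z; simp [hPdef, hfdef]
    have hPdeg : P.natDegree = 4 := by
      simp only [hPdef]
      compute_degree!
    have hPne : P ≠ 0 := by
      intro h
      rw [h] at hPdeg
      simp at hPdeg
    have hmem : ∀ z : ℝ, f z = 0 → z ∈ P.roots.toFinset := by
      intro z hz
      rw [Multiset.mem_toFinset, Polynomial.mem_roots hPne]
      simp [Polynomial.IsRoot, hPeval z, hz]
    obtain ⟨hr1a, hr1b⟩ := hr1mem
    obtain ⟨hr2a, hr2b⟩ := hr2mem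
    obtain ⟨hr3a, hr3b⟩ := hr3mem
    set s : Finset ℝ := {r1, r2, r3, x, y} with hsdef
    have hsub : s ⊆ P.roots.toFinset := by
      intro z hz
      simp only [hsdef, Finset.mem_insert, Finset.mem_singleton] at hz
      rcases hz with h|h|h|h|h <;> subst h <;>
        [exact hmem _ hr1; exact hmem _ hr2; exact hmem _ hr3; exact hmem _ hfx;
         exact hmem _ hfy]
    have hcard : s.card = 5 := by
      simp only [hsdef]
      rw [Finset.card_insert_of_notMem, Finset.card_insert_of_notMem,
        Finset.card_insert_of_notMem, Finset.card_insert_of_notMem, Finset.card_singleton]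
      · simp only [Finset.mem_singleton]; exact hxy
      · simp only [Finset.mem_insert, Finset.mem_singleton]; push_neg
        exact ⟨by linarith, by linarith⟩
      · simp only [Finset.mem_insert, Finset.mem_singleton]; push_neg
        exact ⟨by linarith, by linarith, by linarith⟩
      · simp only [Finset.mem_insert, Finset.mem_singleton]; push_neg
        exact ⟨by linarith, by linarith, by linarith, by linarith⟩
    have h5 : 5 ≤ P.roots.toFinset.card := hcard ▸ Finset.card_le_card hsub
    have h4 : P.roots.toFinset.card ≤ 4 := by
      calc P.roots.toFinset.card ≤ Multiset.card P.roots := Multiset.toFinset_card_le _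
        _ ≤ P.natDegree := Polynomial.card_roots' P
        _ = 4 := hPdeg
    omega
  exact ⟨z₀, ⟨hz₀mem.1, hz₀⟩, fun y ⟨hy2, hy⟩ => key y z₀ hy2 hz₀mem.1 hy hz₀⟩

theorem stmt7 (p θ : ℝ) (hp : 1 < p) (hpθ : p ≤ θ) :
    ∃! z₀ : ℝ, z₀ ∈ Set.Ioi (2 : ℝ) ∧
      z₀ ^ 4 - 16 * p * θ * (p + 1) / (θ + 1) * z₀ ^ 2
        + 16 * p * θ * (p + 1) * (p + θ + 2) / (θ + 1) ^ 2 * z₀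
        - 16 * p * θ * (p + 1) ^ 2 / (θ + 1) ^ 2 = 0 := by
  have hθ : 1 < θ := lt_of_lt_of_le hp hpθ
  have hθ1 : (0:ℝ) < θ + 1 := by linarith
  have hp0 : (0:ℝ) < p := by linarith
  have ht0 : (0:ℝ) < θ := by linarith
  have hp1 : (0:ℝ) < p + 1 := by linarith
  have hpt2 : (0:ℝ) < p + θ + 2 := by linarith
  apply quartic_aux
  · apply div_pos
    · nlinarith [mul_pos (mul_pos hp0 ht0) hp1]
    · linarith
  · apply div_pos
    · nlinarith [mul_pos (mul_pos (mul_pos hp0 ht0) hp1) hpt2]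
    · positivity
  · apply div_pos
    · nlinarith [mul_pos (mul_pos hp0 ht0) (mul_pos hp1 hp1)]
    · positivity
  · have h : 1 - 16 * p * θ * (p + 1) / (θ + 1)
        + 16 * p * θ * (p + 1) * (p + θ + 2) / (θ + 1) ^ 2
        - 16 * p * θ * (p + 1) ^ 2 / (θ + 1) ^ 2 = 1 := by
      field_simp
      ring
    rw [h]; norm_num
  · have hnum : 16 * (θ+1)^2 - 16 * p * θ * (p+1) * (2*θ+1-p) < 0 := by
      nlinarith [mul_pos (mul_pos hp0 ht0) hp1, sq_nonneg (θ - p),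
        mul_pos (by linarith : (0:ℝ) < θ - 1) (by linarith : (0:ℝ) < p - 1),
        mul_pos (mul_pos (mul_pos hp0 ht0) hp1) (by linarith : (0:ℝ) < θ + 1)]
    have h : 16 - 4 * (16 * p * θ * (p + 1) / (θ + 1))
        + 2 * (16 * p * θ * (p + 1) * (p + θ + 2) / (θ + 1) ^ 2)
        - 16 * p * θ * (p + 1) ^ 2 / (θ + 1) ^ 2
        = (16 * (θ+1)^2 - 16 * p * θ * (p+1) * (2*θ+1-p)) / (θ+1)^2 := by
      field_simp
      ring
    rw [h]
    exact div_neg_of_neg_of_pos hnum (by positivity)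
end

section
/- Let 1 < p ≤ θ, q > 0, r > 0 with q + 1 = (θ+1)(r+1)/(p+1), and set a₁ = 4q√(pθ)/(q+1)², a₂ = 4r√(pθ)/(r+1)². Then the condition a₁a₂ > 1 is equivalent to L(r+1) < 0, where L(z) = z⁴ − (16pθ(p+1)/(θ+1)) z² + (16pθ(p+1)(p+θ+2)/(θ+1)²) z − 16pθ(p+1)²/(θ+1)². -/
set_option maxHeartbeats 1000000


theorem stmt13 (p θ q r : ℝ) (hp : 1 < p) (hpθ : p ≤ θ) (hq : 0 < q) (hr : 0 < r)
    (hqr : q + 1 = (θ + 1) * (r + 1) / (p + 1)) :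
    (4 * q * Real.sqrt (p * θ) / (q + 1) ^ 2) * (4 * r * Real.sqrt (p * θ) / (r + 1) ^ 2) > 1 ↔
    (r + 1) ^ 4 - 16 * p * θ * (p + 1) / (θ + 1) * (r + 1) ^ 2
      + 16 * p * θ * (p + 1) * (p + θ + 2) / (θ + 1) ^ 2 * (r + 1)
      - 16 * p * θ * (p + 1) ^ 2 / (θ + 1) ^ 2 < 0 := by
  have hp0 : (0:ℝ) < p := by linarith
  have hθ0 : (0:ℝ) < θ := by linarith
  have hp1 : (0:ℝ) < p + 1 := by linarith
  have hθ1 : (0:ℝ) < θ + 1 := by linarith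
  have hs : Real.sqrt (p * θ) ^ 2 = p * θ := Real.sq_sqrt (by positivity)
  have hqr' : (q + 1) * (p + 1) = (θ + 1) * (r + 1) := by
    field_simp at hqr; linarith
  have key : (4 * q * Real.sqrt (p * θ) / (q + 1) ^ 2) * (4 * r * Real.sqrt (p * θ) / (r + 1) ^ 2)
      = 16 * q * r * (p * θ) / ((q + 1) ^ 2 * (r + 1) ^ 2) := by
    rw [div_mul_div_comm,
      show (4 * q * Real.sqrt (p * θ)) * (4 * r * Real.sqrt (p * θ))
        = 16 * q * r * (Real.sqrt (p * θ) ^ 2) by ring, hs]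
  rw [key, gt_iff_lt, lt_div_iff₀ (by positivity)]
  have hL : (r + 1) ^ 4 - 16 * p * θ * (p + 1) / (θ + 1) * (r + 1) ^ 2
      + 16 * p * θ * (p + 1) * (p + θ + 2) / (θ + 1) ^ 2 * (r + 1)
      - 16 * p * θ * (p + 1) ^ 2 / (θ + 1) ^ 2
      = ((q + 1) ^ 2 * (r + 1) ^ 2 - 16 * q * r * (p * θ)) * (p + 1) ^ 2 / (θ + 1) ^ 2 := by
    have hpoly : (r + 1) ^ 4 * (θ + 1) ^ 2 - 16 * p * θ * (p + 1) * (θ + 1) * (r + 1) ^ 2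
        + 16 * p * θ * (p + 1) * (p + θ + 2) * (r + 1) - 16 * p * θ * (p + 1) ^ 2
        = ((q + 1) ^ 2 * (r + 1) ^ 2 - 16 * q * r * (p * θ)) * (p + 1) ^ 2 := by
      linear_combination (-((r + 1) ^ 2 * ((q + 1) * (p + 1) + (θ + 1) * (r + 1))
        - 16 * p * θ * (p + 1) * r)) * hqr'
    rw [eq_div_iff (by positivity : ((θ:ℝ) + 1) ^ 2 ≠ 0), ← hpoly]
    field_simp
  rw [hL]
  constructor
  · intro h
    apply div_neg_of_neg_of_pos _ (by positivity)
    exact mul_neg_of_neg_of_pos (by linarith) (by positivity)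
  · intro h
    have h2 : (q + 1) ^ 2 * (r + 1) ^ 2 - 16 * q * r * (p * θ) < 0 := by
      by_contra h'
      push_neg at h'
      have : (0:ℝ) ≤ ((q + 1) ^ 2 * (r + 1) ^ 2 - 16 * q * r * (p * θ)) * (p + 1) ^ 2 / (θ + 1) ^ 2 := by
        positivity
      linarith
    linarith
end
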